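/- arXiv:2008.04462 — 2 statements merged into one kernel-verified Lean document; each statement's English description precedes it below -/
import Mathlib

section
/- Let X be a metric space and δ ≥ 0 be such that (x · y)_w ≥ min((x · z)_w, (z · y)_w) − δ for all w, x, y, z ∈ X. Let x₀ ∈ X and let γ : X → X be a bijective isometry such that (γⁿx₀ · γᵐx₀)_{x₀} → ∞ as n, m → ∞. Then limsup_{n→∞} (γⁿx₀ · γ⁻¹x₀)_{x₀} ≤ ½(d(γx₀,x₀) − |γ|_{X,∞}) + 2δ and liminf_{n→∞} (γⁿx₀ · γ⁻¹x₀)_{x₀} ≥ ½(d(γx₀,x₀) − |γ|_{X,∞}) − 2δ. -/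
/-!
Along the orbit, the Gromov product `(γⁿx₀ · γ⁻¹x₀)_{x₀}` equals `½(d(γx₀,x₀) − (aₙ₊₁ − aₙ))`
with `aₙ = d(γⁿx₀, x₀)`, because `γ` moves `(γⁿx₀, γ⁻¹x₀)` to `(γⁿ⁺¹x₀, x₀)`. Since the orbit
converges to a point at infinity, hyperbolicity makes these Gromov products eventually `δ`-close
to each other, so the increments `aₙ₊₁ − aₙ` are eventually `2δ`-close to a constant, and that
constant is `2δ`-close to the average growth rate `L`.
-/

open Filter Topology

section Increments

variable {a : ℕ → ℝ} {L c : ℝ}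

theorem le_of_tendsto_div_of_eventually_sub_le
    (hL : Tendsto (fun n : ℕ => a n / n) atTop (𝓝 L))
    (h : ∀ᶠ k in atTop, a (k + 1) - a k ≤ c) : L ≤ c := by
  obtain ⟨N, hN⟩ := eventually_atTop.1 h
  have hlin : ∀ n, N ≤ n → a n ≤ a N + ((n : ℝ) - N) * c := by
    intro n hn
    induction n, hn using Nat.le_induction with
    | base => simp
    | succ n hn ih => push_cast; linarith [hN n hn]
  have hbound : Tendsto (fun n : ℕ => (a N - N * c) / n + c) atTop (𝓝 c) := by
    simpa using (tendsto_const_div_atTop_nhds_zero_nat (a N - N * c)).add_const c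
  refine le_of_tendsto_of_tendsto hL hbound ?_
  filter_upwards [eventually_ge_atTop (max N 1)] with n hn
  have hn_pos : (0 : ℝ) < n := by exact_mod_cast (le_of_max_le_right hn)
  rw [div_add' _ _ _ hn_pos.ne', div_le_div_iff_of_pos_right hn_pos]
  linarith [hlin n (le_of_max_le_left hn)]

theorem le_of_tendsto_div_of_eventually_le_sub
    (hL : Tendsto (fun n : ℕ => a n / n) atTop (𝓝 L))
    (h : ∀ᶠ k in atTop, c ≤ a (k + 1) - a k) : c ≤ L := by
  have hneg : Tendsto (fun n : ℕ => -a n / n) atTop (𝓝 (-L)) := by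
    simpa [neg_div] using hL.neg
  have := le_of_tendsto_div_of_eventually_sub_le (a := fun n => -a n) (c := -c) hneg
    (h.mono fun k hk => by linarith)
  linarith

end Increments

theorem limsup_le_and_le_liminf_of_eventually_abs_sub_le {ι : Type*} {l : Filter ι} [l.NeBot]
    {F : ι → ℝ} {c ε : ℝ} (h : ∀ᶠ i in l, |F i - c| ≤ ε) :
    limsup F l ≤ c + ε ∧ c - ε ≤ liminf F l := by
  have hle : ∀ᶠ i in l, F i ≤ c + ε :=
    h.mono fun i hi => by linarith [(abs_sub_le_iff.1 hi).1]
  have hge : ∀ᶠ i in l, c - ε ≤ F i :=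
    h.mono fun i hi => by linarith [(abs_sub_le_iff.1 hi).2]
  exact ⟨limsup_le_of_le (isCoboundedUnder_le_of_eventually_le l hge) hle,
    le_liminf_of_le (isCoboundedUnder_ge_of_eventually_le l hle) hge⟩

section GromovProduct

variable {X : Type*} [MetricSpace X]

noncomputable def gromovProduct (w x y : X) : ℝ := (dist x w + dist y w - dist x y) / 2

theorem gromovProduct_comm (w x y : X) : gromovProduct w x y = gromovProduct w y x := by
  simp only [gromovProduct, dist_comm x y, add_comm (dist x w)]

theorem gromovProduct_le_dist_right (w x y : X) : gromovProduct w x y ≤ dist y w := by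
  unfold gromovProduct
  linarith [dist_triangle x y w]

theorem sub_le_gromovProduct_of_le {δ : ℝ}
    (hhyp : ∀ w x y z : X, min (gromovProduct w x z) (gromovProduct w z y) - δ ≤
      gromovProduct w x y)
    {w x y z : X} (h : gromovProduct w x z ≤ gromovProduct w x y) :
    gromovProduct w x z - δ ≤ gromovProduct w y z := by
  have := hhyp w y z x
  rwa [gromovProduct_comm w y x, min_eq_right h] at this

theorem IsometryEquiv.dist_symm_apply_self (γ : X ≃ᵢ X) (x : X) :
    dist (γ.symm x) x = dist (γ x) x := by
  rw [← γ.dist_eq, γ.apply_symm_apply, dist_comm]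

theorem IsometryEquiv.dist_iterate_symm (γ : X ≃ᵢ X) (n : ℕ) (x : X) :
    dist (γ^[n] x) (γ.symm x) = dist (γ^[n + 1] x) x := by
  rw [← γ.dist_eq, γ.apply_symm_apply, Function.iterate_succ_apply']

theorem IsometryEquiv.dist_iterate_succ_sub (γ : X ≃ᵢ X) (n : ℕ) (x : X) :
    dist (γ^[n + 1] x) x - dist (γ^[n] x) x =
      dist (γ x) x - 2 * gromovProduct x (γ^[n] x) (γ.symm x) := by
  rw [gromovProduct, γ.dist_iterate_symm, γ.dist_symm_apply_self]
  ring

end GromovProduct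

theorem gromov_product_stable_length_hyperbolic_general
    {X : Type*} [MetricSpace X] (δ : ℝ)
    (hhyp : ∀ w x y z : X,
      min ((dist x w + dist z w - dist x z) / 2) ((dist z w + dist y w - dist z y) / 2) - δ ≤
        (dist x w + dist y w - dist x y) / 2)
    (x₀ : X) (γ : X ≃ᵢ X) (L : ℝ)
    (hL : Tendsto (fun n : ℕ => dist ((⇑γ)^[n] x₀) x₀ / n) atTop (nhds L))
    (hdiv : ∀ R : ℝ, 0 < R → ∃ N : ℕ, ∀ n m : ℕ, N ≤ n → N ≤ m →
      R ≤ (dist ((⇑γ)^[n] x₀) x₀ + dist ((⇑γ)^[m] x₀) x₀ -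
            dist ((⇑γ)^[n] x₀) ((⇑γ)^[m] x₀)) / 2) :
    limsup (fun n : ℕ =>
        (dist ((⇑γ)^[n] x₀) x₀ + dist (γ.symm x₀) x₀ - dist ((⇑γ)^[n] x₀) (γ.symm x₀)) / 2)
        atTop ≤ (dist (γ x₀) x₀ - L) / 2 + 2 * δ ∧
      (dist (γ x₀) x₀ - L) / 2 - 2 * δ ≤ liminf (fun n : ℕ =>
        (dist ((⇑γ)^[n] x₀) x₀ + dist (γ.symm x₀) x₀ - dist ((⇑γ)^[n] x₀) (γ.symm x₀)) / 2)
        atTop := by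
  set D := dist (γ x₀) x₀
  set F : ℕ → ℝ := fun n => gromovProduct x₀ (γ^[n] x₀) (γ.symm x₀)
  change limsup F atTop ≤ _ ∧ _ ≤ liminf F atTop
  obtain ⟨N, hN⟩ := hdiv (D + 1) (by positivity)
  have hclose : ∀ n ≥ N, ∀ m ≥ N, F m - δ ≤ F n := fun n hn m hm =>
    sub_le_gromovProduct_of_le hhyp <| calc
      F m ≤ dist (γ.symm x₀) x₀ := gromovProduct_le_dist_right _ _ _
      _ = D := γ.dist_symm_apply_self x₀
      _ ≤ gromovProduct x₀ (γ^[m] x₀) (γ^[n] x₀) := by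
        rw [gromovProduct]; linarith [hN m n hm hn]
  have hinc : ∀ n, dist (γ^[n + 1] x₀) x₀ - dist (γ^[n] x₀) x₀ = D - 2 * F n :=
    fun n => γ.dist_iterate_succ_sub n x₀
  have hL_le : L ≤ D - 2 * F N + 2 * δ :=
    le_of_tendsto_div_of_eventually_sub_le hL <| eventually_atTop.2
      ⟨N, fun k hk => by linarith [hinc k, hclose k hk N le_rfl]⟩
  have hL_ge : D - 2 * F N - 2 * δ ≤ L :=
    le_of_tendsto_div_of_eventually_le_sub hL <| eventually_atTop.2
      ⟨N, fun k hk => by linarith [hinc k, hclose N le_rfl k hk]⟩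
  refine limsup_le_and_le_liminf_of_eventually_abs_sub_le ?_
  filter_upwards [eventually_ge_atTop N] with n hn
  rw [abs_sub_le_iff]
  constructor <;> linarith [hclose n hn N le_rfl, hclose N le_rfl n hn]

/-- Let `X` be a `δ`-hyperbolic metric space (in the Gromov-product sense),
`x₀ ∈ X`, and `γ` a bijective isometry of `X` such that `(γⁿx₀ · γᵐx₀)_{x₀} → ∞` as
`n, m → ∞`.  Then, with `L = |γ|_{X,∞}` the stable translation length,
`limsup (γⁿx₀ · γ⁻¹x₀)_{x₀} ≤ ½(d(γx₀,x₀) − L) + 2δ` and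
`liminf (γⁿx₀ · γ⁻¹x₀)_{x₀} ≥ ½(d(γx₀,x₀) − L) − 2δ`. -/
theorem gromov_product_stable_length_hyperbolic
    {X : Type*} [MetricSpace X] (δ : ℝ) (hδ : 0 ≤ δ)
    (hhyp : ∀ w x y z : X,
      min ((dist x w + dist z w - dist x z) / 2) ((dist z w + dist y w - dist z y) / 2) - δ ≤
        (dist x w + dist y w - dist x y) / 2)
    (x₀ : X) (γ : X ≃ᵢ X) (L : ℝ)
    (hL : Tendsto (fun n : ℕ => dist ((⇑γ)^[n] x₀) x₀ / n) atTop (nhds L))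
    (hdiv : ∀ R : ℝ, 0 < R → ∃ N : ℕ, ∀ n m : ℕ, N ≤ n → N ≤ m →
      R ≤ (dist ((⇑γ)^[n] x₀) x₀ + dist ((⇑γ)^[m] x₀) x₀ -
            dist ((⇑γ)^[n] x₀) ((⇑γ)^[m] x₀)) / 2) :
    limsup (fun n : ℕ =>
        (dist ((⇑γ)^[n] x₀) x₀ + dist (γ.symm x₀) x₀ - dist ((⇑γ)^[n] x₀) (γ.symm x₀)) / 2)
        atTop ≤ (dist (γ x₀) x₀ - L) / 2 + 2 * δ ∧
      (dist (γ x₀) x₀ - L) / 2 - 2 * δ ≤ liminf (fun n : ℕ =>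
        (dist ((⇑γ)^[n] x₀) x₀ + dist (γ.symm x₀) x₀ - dist ((⇑γ)^[n] x₀) (γ.symm x₀)) / 2)
        atTop :=
  gromov_product_stable_length_hyperbolic_general δ hhyp x₀ γ L hL hdiv
end

section
/- Let Γ be a group generated by a finite set S, with word length |·|_Γ. Let f : ℕ → (0, ∞) be a Floyd function: f is summable, non-increasing, and there exists m ∈ (0, 1] with f(k+1) ≥ m·f(k) for all k. For g, h ∈ Γ define d_f(g, h) as the infimum, over all finite chains g = x₀, x₁, …, xₙ = h with xᵢ⁻¹xᵢ₊₁ ∈ S ∪ S⁻¹ for each i, of Σᵢ f(max(|xᵢ|_Γ, |xᵢ₊₁|_Γ)). Let ρ : Γ → SL(d, ℝ) (d ≥ 2) be a homomorphism for which there exists K > 0 with σ₂(ρ(γ))/σ₁(ρ(γ)) ≤ K·f(|γ|_Γ) for all γ ∈ Γ. Then there exist a constant C > 0 and a finite subset A of Γ such that for all g, h ∈ Γ ∖ A and all unit vectors u, w ∈ ℝ^d with ρ(g)ρ(g)ᵀ u = σ₁(ρ(g))² u and ρ(h)ρ(h)ᵀ w = σ₁(ρ(h))² w, one has √(1 − ⟨u,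 w⟩²) ≤ C · d_f(g, h). -/
open Matrix Filter

/-- The list of singular values of a real square matrix, in decreasing order
(the square roots of the eigenvalues of `Aᴴ * A`). -/
noncomputable def svalList {n : Type*} [Fintype n] [DecidableEq n]
    (A : Matrix n n ℝ) : List ℝ :=
  (Multiset.sort
    (Finset.univ.val.map fun i =>
      Real.sqrt ((Matrix.isHermitian_conjTranspose_mul_self A).eigenvalues i)) (· ≤ ·)).reverse

/-- `sval j A` is the `j`-th largest singular value `σⱼ(A)` of `A` (1-indexed). -/
noncomputable def sval {n : Type*} [Fintype n] [DecidableEq n]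
    (j : ℕ) (A : Matrix n n ℝ) : ℝ :=
  (svalList A).getD (j - 1) 0

/-- The word length of `γ` with respect to a generating set `S`. -/
noncomputable def wordLength {Γ : Type*} [Group Γ] (S : Set Γ) (γ : Γ) : ℕ :=
  sInf {n : ℕ | ∃ l : List Γ, l.length = n ∧ (∀ x ∈ l, x ∈ S ∨ x⁻¹ ∈ S) ∧ l.prod = γ}

/-- The Floyd distance on `Γ` associated to the Floyd function `f`: the infimum over
finite chains `g = x₀, x₁, …, xₙ = h` (consecutive points differing by a generator) of
`Σᵢ f(max(|xᵢ|, |xᵢ₊₁|))`. -/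
noncomputable def floydDist {Γ : Type*} [Group Γ] (S : Set Γ) (f : ℕ → ℝ) (g h : Γ) : ℝ :=
  sInf {r : ℝ | ∃ (n : ℕ) (x : ℕ → Γ), x 0 = g ∧ x n = h ∧
    (∀ i < n, (x i)⁻¹ * x (i + 1) ∈ S ∨ ((x i)⁻¹ * x (i + 1))⁻¹ ∈ S) ∧
    r = ∑ i ∈ Finset.range n, f (max (wordLength S (x i)) (wordLength S (x (i + 1))))}

/-!
The sine of the angle between two lines, `√(1 - ⟨u, w⟩²)` for unit vectors `u`, `w`, is up to
the factor `√2` the distance between `u uᵀ` and `w wᵀ`, so it satisfies the triangle inequality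
along a chain `g = x₀, x₁, …, xₙ = h`. For neighbours `x`, `y = x s` with `|y| ≤ |x|`, a
Courant–Fischer argument bounds the angle between the Cartan attractors of `ρ(x)` and
`ρ(y) = ρ(x) ρ(s)` by `σ₂/σ₁(ρ(x)) · σ₁(ρ(s)) σ₁(ρ(s)⁻¹) ≤ K L f(|x|)`, where `L` bounds the
condition numbers of the generators; summing over the chain gives the Lipschitz bound. The finite
set `A` is a ball outside of which `K f(|γ|) < 1`, so that `σ₂ < σ₁` there and the attractor is a
line; this is needed for the trivial chain from `g` to itself.
-/

namespace Matrix.IsHermitian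

variable {n : Type*} [Fintype n] [DecidableEq n] {M : Matrix n n ℝ} (hM : M.IsHermitian)

lemma dotProduct_eq_sum_eigenvectorBasis (x y : n → ℝ) :
    x ⬝ᵥ y = ∑ i, (⇑(hM.eigenvectorBasis i) ⬝ᵥ x) * (⇑(hM.eigenvectorBasis i) ⬝ᵥ y) := by
  simpa [EuclideanSpace.inner_toLp_toLp, EuclideanSpace.inner_eq_star_dotProduct,
    dotProduct_comm] using (hM.eigenvectorBasis.sum_inner_mul_inner (WithLp.toLp 2 x)
      (WithLp.toLp 2 y)).symm

lemma dotProduct_self_eq_sum_sq (y : n → ℝ) :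
    y ⬝ᵥ y = ∑ i, (⇑(hM.eigenvectorBasis i) ⬝ᵥ y) ^ 2 := by
  simp only [hM.dotProduct_eq_sum_eigenvectorBasis y y, sq]

lemma eq_zero_of_forall_eigenvectorBasis_dotProduct_eq_zero {v : n → ℝ}
    (hv : ∀ i, ⇑(hM.eigenvectorBasis i) ⬝ᵥ v = 0) : v = 0 :=
  dotProduct_self_eq_zero.1 (by simp [hM.dotProduct_self_eq_sum_sq, hv])

lemma eigenvectorBasis_dotProduct_self (i : n) :
    ⇑(hM.eigenvectorBasis i) ⬝ᵥ ⇑(hM.eigenvectorBasis i) = 1 := by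
  have h := orthonormal_iff_ite.1 hM.eigenvectorBasis.orthonormal i i
  rw [if_pos rfl, EuclideanSpace.inner_eq_star_dotProduct] at h
  simpa using h

lemma eigenvectorBasis_dotProduct_mulVec (i : n) (v : n → ℝ) :
    ⇑(hM.eigenvectorBasis i) ⬝ᵥ (M *ᵥ v) = hM.eigenvalues i * (⇑(hM.eigenvectorBasis i) ⬝ᵥ v) := by
  rw [dotProduct_mulVec, ← mulVec_transpose, ← conjTranspose_eq_transpose_of_trivial, hM,
    mulVec_eigenvectorBasis, smul_dotProduct, smul_eq_mul]

lemma dotProduct_mulVec_self_eq_sum (y : n → ℝ) :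
    y ⬝ᵥ (M *ᵥ y) = ∑ i, hM.eigenvalues i * (⇑(hM.eigenvectorBasis i) ⬝ᵥ y) ^ 2 := by
  rw [hM.dotProduct_eq_sum_eigenvectorBasis]
  simp only [eigenvectorBasis_dotProduct_mulVec]
  congr 1 with i
  ring

lemma eigenvectorBasis_dotProduct_eq_zero {v : n → ℝ} {t : ℝ} (hv : M *ᵥ v = t • v) {i : n}
    (hi : hM.eigenvalues i ≠ t) : ⇑(hM.eigenvectorBasis i) ⬝ᵥ v = 0 := by
  have h := hM.eigenvectorBasis_dotProduct_mulVec i v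
  rw [hv, dotProduct_smul, smul_eq_mul] at h
  exact (mul_eq_mul_right_iff.1 h.symm).resolve_left hi

lemma dotProduct_mulVec_self_le {t : ℝ} (ht : ∀ i, hM.eigenvalues i ≤ t) (y : n → ℝ) :
    y ⬝ᵥ (M *ᵥ y) ≤ t * (y ⬝ᵥ y) := by
  rw [hM.dotProduct_mulVec_self_eq_sum, hM.dotProduct_self_eq_sum_sq, Finset.mul_sum]
  exact Finset.sum_le_sum fun i _ => mul_le_mul_of_nonneg_right (ht i) (sq_nonneg _)

lemma dotProduct_mulVec_self_le_of_orthogonal {t s : ℝ} (ht : ∀ i, hM.eigenvalues i ≤ t)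
    (hs : ∀ i j, s < hM.eigenvalues i → s < hM.eigenvalues j → i = j)
    {u y : n → ℝ} (hu : M *ᵥ u = t • u) (hu0 : u ≠ 0) (hy : y ⬝ᵥ u = 0) :
    y ⬝ᵥ (M *ᵥ y) ≤ s * (y ⬝ᵥ y) := by
  by_cases hts : t ≤ s
  · exact hM.dotProduct_mulVec_self_le (fun i => (ht i).trans hts) y
  push Not at hts
  -- `t` is the only eigenvalue above `s`, so `u` lies on its eigenline and `y ⊥ u` misses it.
  obtain ⟨k, hk⟩ : ∃ k, hM.eigenvalues k = t := by
    by_contra! hne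
    exact hu0 (hM.eq_zero_of_forall_eigenvectorBasis_dotProduct_eq_zero fun i =>
      hM.eigenvectorBasis_dotProduct_eq_zero hu (hne i))
  have hsmall : ∀ i ≠ k, hM.eigenvalues i ≤ s := fun i hi =>
    not_lt.1 fun h => hi (hs i k h (hk ▸ hts))
  have hu_k : ∀ i ≠ k, ⇑(hM.eigenvectorBasis i) ⬝ᵥ u = 0 := fun i hi =>
    hM.eigenvectorBasis_dotProduct_eq_zero hu fun h => (hsmall i hi).not_gt (h ▸ hts)
  have hu_k' : ⇑(hM.eigenvectorBasis k) ⬝ᵥ u ≠ 0 := fun h =>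
    hu0 (hM.eq_zero_of_forall_eigenvectorBasis_dotProduct_eq_zero fun i => by
      rcases eq_or_ne i k with rfl | hi
      exacts [h, hu_k i hi])
  have hy_k : ⇑(hM.eigenvectorBasis k) ⬝ᵥ y = 0 := by
    have h := hM.dotProduct_eq_sum_eigenvectorBasis u y
    rw [Finset.sum_eq_single k (fun i _ hi => by rw [hu_k i hi, zero_mul]) (by simp),
      dotProduct_comm, hy] at h
    exact (mul_eq_zero.1 h.symm).resolve_left hu_k'
  rw [hM.dotProduct_mulVec_self_eq_sum, hM.dotProduct_self_eq_sum_sq, Finset.mul_sum]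
  refine Finset.sum_le_sum fun i _ => ?_
  rcases eq_or_ne i k with rfl | hi
  · simp [hy_k]
  · exact mul_le_mul_of_nonneg_right (hsmall i hi) (sq_nonneg _)

end Matrix.IsHermitian

section SingularValues

variable {n : Type*} [Fintype n] [DecidableEq n]

lemma svalList_eq_ofFn (A : Matrix n n ℝ) :
    svalList A = List.ofFn fun k => √((isHermitian_conjTranspose_mul_self A).eigenvalues₀ k) := by
  set hA := isHermitian_conjTranspose_mul_self A
  refine List.Perm.eq_of_sortedGE ?_ ?_ (Multiset.coe_eq_coe.1 ?_)
  · exact List.sortedGE_reverse.2 (List.sortedLE_iff_pairwise.2 (Multiset.pairwise_sort _ _))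
  · exact List.sortedGE_ofFn_iff.2 fun _ _ hkl => Real.sqrt_le_sqrt (hA.eigenvalues₀_antitone hkl)
  · rw [svalList, Multiset.coe_reverse, Multiset.sort_eq, ← Fin.univ_val_map,
      ← Multiset.map_univ_val_equiv (Fintype.equivOfCardEq (Fintype.card_fin _)).symm,
      Multiset.map_map]
    rfl

lemma sq_sval_eq_eigenvalues₀ (A : Matrix n n ℝ) {k : ℕ} (hk : k < Fintype.card n) :
    sval (k + 1) A ^ 2 = (isHermitian_conjTranspose_mul_self A).eigenvalues₀ ⟨k, hk⟩ := by
  rw [sval, Nat.add_sub_cancel, svalList_eq_ofFn, List.getD_eq_getElem _ _ (by simpa using hk),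
    List.getElem_ofFn, Real.sq_sqrt]
  simpa [IsHermitian.eigenvalues] using eigenvalues_conjTranspose_mul_self_nonneg A
    (Fintype.equivOfCardEq (Fintype.card_fin _) ⟨k, hk⟩)

lemma sval_nonneg (k : ℕ) (A : Matrix n n ℝ) : 0 ≤ sval k A := by
  rw [sval, svalList_eq_ofFn]
  by_cases hk : k - 1 < Fintype.card n
  · rw [List.getD_eq_getElem _ _ (by simpa using hk), List.getElem_ofFn]
    exact Real.sqrt_nonneg _
  · rw [List.getD_eq_default _ _ (by simpa using hk)]
lemma eigenvalues_conjTranspose_mul_self_le_sq_sval_one (A : Matrix n n ℝ) (i : n) :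
    (isHermitian_conjTranspose_mul_self A).eigenvalues i ≤ sval 1 A ^ 2 := by
  have hn : 0 < Fintype.card n := Fintype.card_pos_iff.2 ⟨i⟩
  rw [sq_sval_eq_eigenvalues₀ A (k := 0) hn]
  exact (isHermitian_conjTranspose_mul_self A).eigenvalues₀_antitone
    (Fin.mk_le_of_le_val (Nat.zero_le _))

lemma exists_eigenvalues_conjTranspose_mul_self_eq_sq_sval_one [Nonempty n] (A : Matrix n n ℝ) :
    ∃ i, (isHermitian_conjTranspose_mul_self A).eigenvalues i = sval 1 A ^ 2 :=
  ⟨Fintype.equivOfCardEq (Fintype.card_fin _) ⟨0, Fintype.card_pos⟩, by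
    simp [IsHermitian.eigenvalues, sq_sval_eq_eigenvalues₀ A (k := 0) Fintype.card_pos]⟩

lemma eq_of_sq_sval_two_lt_eigenvalues_conjTranspose_mul_self (A : Matrix n n ℝ) {i j : n}
    (hi : sval 2 A ^ 2 < (isHermitian_conjTranspose_mul_self A).eigenvalues i)
    (hj : sval 2 A ^ 2 < (isHermitian_conjTranspose_mul_self A).eigenvalues j) : i = j := by
  set e := Fintype.equivOfCardEq (Fintype.card_fin (Fintype.card n))
  have top : ∀ i, sval 2 A ^ 2 < (isHermitian_conjTranspose_mul_self A).eigenvalues i →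
      (e.symm i : ℕ) = 0 := by
    intro i hi
    by_contra h
    have h1 : 1 < Fintype.card n := by have := (e.symm i).isLt; omega
    rw [sq_sval_eq_eigenvalues₀ A (k := 1) h1] at hi
    exact hi.not_ge ((isHermitian_conjTranspose_mul_self A).eigenvalues₀_antitone
      (Fin.mk_le_of_le_val (b := e.symm i) (by omega)))
  exact e.symm.injective (Fin.ext ((top i hi).trans (top j hj).symm))

end SingularValues

namespace Matrix

variable {n : Type*} [Fintype n]

lemma dotProduct_sq_le_dotProduct_self_mul_dotProduct_self (x y : n → ℝ) :
    (x ⬝ᵥ y) ^ 2 ≤ (x ⬝ᵥ x) * (y ⬝ᵥ y) := by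
  simpa [dotProduct, sq] using Finset.sum_mul_sq_le_sq_mul_sq Finset.univ x y

lemma dotProduct_self_nonneg (v : n → ℝ) : 0 ≤ v ⬝ᵥ v := by
  simpa using dotProduct_star_self_nonneg v

lemma isHermitian_mul_transpose_self (A : Matrix n n ℝ) : (A * Aᵀ).IsHermitian := by
  simpa using isHermitian_mul_conjTranspose_self A

lemma mulVec_dotProduct_mulVec (A : Matrix n n ℝ) (v : n → ℝ) :
    (A *ᵥ v) ⬝ᵥ (A *ᵥ v) = v ⬝ᵥ ((Aᴴ * A) *ᵥ v) := by
  rw [dotProduct_mulVec, ← mulVec_transpose, mulVec_mulVec, dotProduct_comm,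
    conjTranspose_eq_transpose_of_trivial]

lemma transpose_mulVec_dotProduct_transpose_mulVec (A : Matrix n n ℝ) (v : n → ℝ) :
    (Aᵀ *ᵥ v) ⬝ᵥ (Aᵀ *ᵥ v) = v ⬝ᵥ ((A * Aᵀ) *ᵥ v) := by
  simpa using mulVec_dotProduct_mulVec Aᵀ v

def rejection (u w : n → ℝ) : n → ℝ := w - (u ⬝ᵥ w) • u

variable {u w : n → ℝ}

lemma sq_dotProduct_le_one (hu : u ⬝ᵥ u = 1) (hw : w ⬝ᵥ w = 1) : (u ⬝ᵥ w) ^ 2 ≤ 1 := by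
  simpa [hu, hw] using dotProduct_sq_le_dotProduct_self_mul_dotProduct_self u w

lemma rejection_dotProduct_left (hu : u ⬝ᵥ u = 1) : rejection u w ⬝ᵥ u = 0 := by
  simp [rejection, sub_dotProduct, hu, dotProduct_comm w u]

lemma rejection_dotProduct_right (hw : w ⬝ᵥ w = 1) :
    rejection u w ⬝ᵥ w = 1 - (u ⬝ᵥ w) ^ 2 := by
  simp [rejection, sub_dotProduct, hw, sq]

lemma rejection_dotProduct_self (hu : u ⬝ᵥ u = 1) (hw : w ⬝ᵥ w = 1) :
    rejection u w ⬝ᵥ rejection u w = 1 - (u ⬝ᵥ w) ^ 2 := by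
  conv_lhs => arg 2; rw [rejection]
  rw [dotProduct_sub, dotProduct_smul, rejection_dotProduct_left hu,
    rejection_dotProduct_right hw, smul_zero, sub_zero]

variable [DecidableEq n]

lemma eigenvalues_mul_transpose_self (A : Matrix n n ℝ) :
    (isHermitian_mul_transpose_self A).eigenvalues =
      (isHermitian_conjTranspose_mul_self A).eigenvalues :=
  (IsHermitian.eigenvalues_eq_eigenvalues_iff _ _).2 (by simpa using charpoly_mul_comm A Aᵀ)

lemma mulVec_dotProduct_mulVec_le (A : Matrix n n ℝ) (v : n → ℝ) :
    (A *ᵥ v) ⬝ᵥ (A *ᵥ v) ≤ sval 1 A ^ 2 * (v ⬝ᵥ v) := by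
  rw [mulVec_dotProduct_mulVec]
  exact (isHermitian_conjTranspose_mul_self A).dotProduct_mulVec_self_le
    (eigenvalues_conjTranspose_mul_self_le_sq_sval_one A) v

lemma exists_mulVec_dotProduct_mulVec_eq [Nonempty n] (A : Matrix n n ℝ) :
    ∃ v : n → ℝ, v ⬝ᵥ v = 1 ∧ (A *ᵥ v) ⬝ᵥ (A *ᵥ v) = sval 1 A ^ 2 := by
  set hA := isHermitian_conjTranspose_mul_self A
  obtain ⟨i, hi⟩ := exists_eigenvalues_conjTranspose_mul_self_eq_sq_sval_one A
  refine ⟨hA.eigenvectorBasis i, hA.eigenvectorBasis_dotProduct_self i, ?_⟩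
  rw [mulVec_dotProduct_mulVec, hA.mulVec_eigenvectorBasis, dotProduct_smul,
    hA.eigenvectorBasis_dotProduct_self, hi, smul_eq_mul, mul_one]

lemma sval_one_mul_le [Nonempty n] (A B : Matrix n n ℝ) :
    sval 1 (A * B) ≤ sval 1 A * sval 1 B := by
  obtain ⟨v, hv, hABv⟩ := exists_mulVec_dotProduct_mulVec_eq (A * B)
  refine (pow_le_pow_iff_left₀ (sval_nonneg 1 _)
    (mul_nonneg (sval_nonneg 1 A) (sval_nonneg 1 B)) two_ne_zero).1 ?_
  calc sval 1 (A * B) ^ 2 = (A *ᵥ (B *ᵥ v)) ⬝ᵥ (A *ᵥ (B *ᵥ v)) := by rw [mulVec_mulVec, hABv]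
    _ ≤ sval 1 A ^ 2 * ((B *ᵥ v) ⬝ᵥ (B *ᵥ v)) := mulVec_dotProduct_mulVec_le A _
    _ ≤ sval 1 A ^ 2 * (sval 1 B ^ 2 * (v ⬝ᵥ v)) := by
      gcongr; exact mulVec_dotProduct_mulVec_le B v
    _ = (sval 1 A * sval 1 B) ^ 2 := by rw [hv]; ring

lemma sval_one_pos [Nonempty n] {A : Matrix n n ℝ} (hA : IsUnit A.det) : 0 < sval 1 A := by
  refine (sval_nonneg 1 A).lt_of_ne fun h => ?_
  obtain ⟨v, hv, hAv⟩ := exists_mulVec_dotProduct_mulVec_eq A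
  rw [← h, zero_pow two_ne_zero, dotProduct_self_eq_zero] at hAv
  simp [eq_zero_of_mulVec_eq_zero hA.ne_zero hAv] at hv

end Matrix

section CartanAttractor

variable {n : Type*} [Fintype n] [DecidableEq n]

def SpansCartanAttractor (A : Matrix n n ℝ) (u : n → ℝ) : Prop :=
  u ⬝ᵥ u = 1 ∧ (A * Aᵀ) *ᵥ u = sval 1 A ^ 2 • u

lemma exists_spansCartanAttractor [Nonempty n] (A : Matrix n n ℝ) :
    ∃ u, SpansCartanAttractor A u := by
  set hM := isHermitian_mul_transpose_self A
  obtain ⟨i, hi⟩ := exists_eigenvalues_conjTranspose_mul_self_eq_sq_sval_one A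
  refine ⟨hM.eigenvectorBasis i, hM.eigenvectorBasis_dotProduct_self i, ?_⟩
  rw [hM.mulVec_eigenvectorBasis, eigenvalues_mul_transpose_self, hi]

namespace SpansCartanAttractor

variable {A B : Matrix n n ℝ} {u w : n → ℝ}

lemma ne_zero (hu : SpansCartanAttractor A u) : u ≠ 0 := by
  rintro rfl
  simpa using hu.1

lemma dotProduct_mulVec_le_of_orthogonal (hu : SpansCartanAttractor A u) {y : n → ℝ}
    (hy : y ⬝ᵥ u = 0) : y ⬝ᵥ ((A * Aᵀ) *ᵥ y) ≤ sval 2 A ^ 2 * (y ⬝ᵥ y) := by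
  refine (isHermitian_mul_transpose_self A).dotProduct_mulVec_self_le_of_orthogonal ?_ ?_ hu.2
    hu.ne_zero hy
  · simpa only [eigenvalues_mul_transpose_self] using
      eigenvalues_conjTranspose_mul_self_le_sq_sval_one A
  · simpa only [eigenvalues_mul_transpose_self] using
      fun i j => eq_of_sq_sval_two_lt_eigenvalues_conjTranspose_mul_self A (i := i) (j := j)

lemma sq_dotProduct_eq_one (hA : sval 2 A < sval 1 A) (hu : SpansCartanAttractor A u)
    (hw : SpansCartanAttractor A w) : (u ⬝ᵥ w) ^ 2 = 1 := by
  have hy : (A * Aᵀ) *ᵥ rejection u w = sval 1 A ^ 2 • rejection u w := by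
    simp only [rejection, mulVec_sub, mulVec_smul, hu.2, hw.2, smul_sub, smul_comm (u ⬝ᵥ w)]
  have key := hu.dotProduct_mulVec_le_of_orthogonal (rejection_dotProduct_left hu.1 (w := w))
  rw [hy, dotProduct_smul, smul_eq_mul, rejection_dotProduct_self hu.1 hw.1] at key
  have hsq : sval 2 A ^ 2 < sval 1 A ^ 2 := pow_lt_pow_left₀ hA (sval_nonneg 2 A) two_ne_zero
  nlinarith [sq_dotProduct_le_one hu.1 hw.1]

lemma sval_one_mul_sqrt_one_sub_sq_dotProduct_le (hu : SpansCartanAttractor A u)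
    (hw : SpansCartanAttractor (A * B) w) :
    sval 1 (A * B) * √(1 - (u ⬝ᵥ w) ^ 2) ≤ sval 2 A * sval 1 B := by
  set s := √(1 - (u ⬝ᵥ w) ^ 2)
  set σ := sval 1 (A * B)
  set y := rejection u w
  set z := (A * B)ᵀ *ᵥ w
  have hs : s ^ 2 = 1 - (u ⬝ᵥ w) ^ 2 := Real.sq_sqrt (sub_nonneg.2 (sq_dotProduct_le_one hu.1 hw.1))
  have hyy : y ⬝ᵥ y = s ^ 2 := by rw [rejection_dotProduct_self hu.1 hw.1, hs]
  have hzz : z ⬝ᵥ z = σ ^ 2 := by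
    rw [transpose_mulVec_dotProduct_transpose_mulVec, hw.2, dotProduct_smul, hw.1, smul_eq_mul,
      mul_one]
  have hσs : σ ^ 2 * s ^ 2 = (Aᵀ *ᵥ y) ⬝ᵥ (B *ᵥ z) :=
    calc σ ^ 2 * s ^ 2 = y ⬝ᵥ (σ ^ 2 • w) := by
          rw [dotProduct_smul, smul_eq_mul, rejection_dotProduct_right hw.1, hs]
      _ = y ⬝ᵥ (A *ᵥ (B *ᵥ z)) := by rw [← hw.2, mulVec_mulVec, mulVec_mulVec, Matrix.mul_assoc]
      _ = (Aᵀ *ᵥ y) ⬝ᵥ (B *ᵥ z) := by rw [dotProduct_mulVec, mulVec_transpose]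
  have hAy : (Aᵀ *ᵥ y) ⬝ᵥ (Aᵀ *ᵥ y) ≤ sval 2 A ^ 2 * s ^ 2 := by
    rw [transpose_mulVec_dotProduct_transpose_mulVec, ← hyy]
    exact hu.dotProduct_mulVec_le_of_orthogonal (rejection_dotProduct_left hu.1)
  have hBz : (B *ᵥ z) ⬝ᵥ (B *ᵥ z) ≤ sval 1 B ^ 2 * σ ^ 2 := hzz ▸ mulVec_dotProduct_mulVec_le B z
  have h4 : (σ * s) ^ 2 * (σ * s) ^ 2 ≤ (sval 2 A * sval 1 B) ^ 2 * (σ * s) ^ 2 :=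
    calc (σ * s) ^ 2 * (σ * s) ^ 2 = ((Aᵀ *ᵥ y) ⬝ᵥ (B *ᵥ z)) ^ 2 := by rw [← hσs]; ring
      _ ≤ ((Aᵀ *ᵥ y) ⬝ᵥ (Aᵀ *ᵥ y)) * ((B *ᵥ z) ⬝ᵥ (B *ᵥ z)) :=
        dotProduct_sq_le_dotProduct_self_mul_dotProduct_self _ _
      _ ≤ (sval 2 A ^ 2 * s ^ 2) * (sval 1 B ^ 2 * σ ^ 2) :=
        mul_le_mul hAy hBz (dotProduct_self_nonneg _) (by positivity)
      _ = (sval 2 A * sval 1 B) ^ 2 * (σ * s) ^ 2 := by ring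
  have hY : 0 ≤ sval 2 A * sval 1 B := mul_nonneg (sval_nonneg 2 A) (sval_nonneg 1 B)
  by_contra! hlt
  nlinarith [mul_lt_mul'' hlt hlt hY hY, pow_pos (hY.trans_lt hlt) 2]

lemma sqrt_one_sub_sq_dotProduct_le [Nonempty n] (hA : IsUnit A.det) (hB : IsUnit B.det)
    (hu : SpansCartanAttractor A u) (hw : SpansCartanAttractor (A * B) w) :
    √(1 - (u ⬝ᵥ w) ^ 2) ≤ sval 2 A / sval 1 A * (sval 1 B * sval 1 B⁻¹) := by
  have hσA : sval 1 A ≤ sval 1 (A * B) * sval 1 B⁻¹ := by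
    simpa [Matrix.mul_assoc, mul_nonsing_inv B hB] using sval_one_mul_le (A * B) B⁻¹
  rw [div_mul_eq_mul_div, le_div_iff₀ (sval_one_pos hA)]
  calc √(1 - (u ⬝ᵥ w) ^ 2) * sval 1 A
      ≤ sval 1 (A * B) * √(1 - (u ⬝ᵥ w) ^ 2) * sval 1 B⁻¹ := by
        nlinarith [mul_le_mul_of_nonneg_left hσA (Real.sqrt_nonneg (1 - (u ⬝ᵥ w) ^ 2))]
    _ ≤ sval 2 A * sval 1 B * sval 1 B⁻¹ :=
        mul_le_mul_of_nonneg_right (hu.sval_one_mul_sqrt_one_sub_sq_dotProduct_le hw)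
          (sval_nonneg 1 _)
    _ = sval 2 A * (sval 1 B * sval 1 B⁻¹) := by ring

end SpansCartanAttractor

end CartanAttractor

section SineDistance

variable {n : Type*} [Fintype n]

def outerSelf (u : n → ℝ) : EuclideanSpace ℝ (n × n) := WithLp.toLp 2 fun p => u p.1 * u p.2

lemma dist_outerSelf {u w : n → ℝ} (hu : u ⬝ᵥ u = 1) (hw : w ⬝ᵥ w = 1) :
    dist (outerSelf u) (outerSelf w) = √2 * √(1 - (u ⬝ᵥ w) ^ 2) := by
  have hsum : ∑ p : n × n, (u p.1 * u p.2 - w p.1 * w p.2) ^ 2 =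
      (u ⬝ᵥ u) * (u ⬝ᵥ u) - 2 * ((u ⬝ᵥ w) * (u ⬝ᵥ w)) + (w ⬝ᵥ w) * (w ⬝ᵥ w) := by
    simp only [dotProduct, Fintype.sum_prod_type, Finset.sum_mul, Finset.mul_sum,
      ← Finset.sum_sub_distrib, ← Finset.sum_add_distrib]
    exact Finset.sum_congr rfl fun i _ => Finset.sum_congr rfl fun j _ => by ring
  rw [EuclideanSpace.dist_eq, ← Real.sqrt_mul zero_le_two]
  simp only [outerSelf, Real.dist_eq, sq_abs]
  rw [hsum, hu, hw]
  ring_nf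

lemma sqrt_one_sub_sq_dotProduct_le_sum (v : ℕ → n → ℝ) (N : ℕ)
    (hv : ∀ i ≤ N, v i ⬝ᵥ v i = 1) :
    √(1 - (v 0 ⬝ᵥ v N) ^ 2) ≤ ∑ i ∈ Finset.range N, √(1 - (v i ⬝ᵥ v (i + 1)) ^ 2) := by
  have h := dist_le_range_sum_dist (fun i => outerSelf (v i)) N
  rw [dist_outerSelf (hv 0 N.zero_le) (hv N le_rfl), Finset.sum_congr rfl fun i hi =>
    dist_outerSelf (hv i (Finset.mem_range.1 hi).le) (hv (i + 1) (Finset.mem_range.1 hi)),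
    ← Finset.mul_sum] at h
  exact le_of_mul_le_mul_left h (by positivity)

end SineDistance

section WordMetric

variable {Γ : Type*} [Group Γ] {S : Set Γ}

lemma exists_list_prod_eq_of_closure_eq_top (hS : Subgroup.closure S = ⊤) (γ : Γ) :
    ∃ l : List Γ, (∀ x ∈ l, x ∈ S ∨ x⁻¹ ∈ S) ∧ l.prod = γ := by
  have hγ : γ ∈ Submonoid.closure (S ∪ S⁻¹) := by
    rw [← Subgroup.closure_toSubmonoid, hS]
    trivial
  simpa using Submonoid.exists_list_of_mem_closure hγ

lemma exists_list_length_eq_wordLength (hS : Subgroup.closure S = ⊤) (γ : Γ) :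
    ∃ l : List Γ, l.length = wordLength S γ ∧ (∀ x ∈ l, x ∈ S ∨ x⁻¹ ∈ S) ∧ l.prod = γ := by
  obtain ⟨l, hl, hprod⟩ := exists_list_prod_eq_of_closure_eq_top hS γ
  exact Nat.sInf_mem (s := {n | ∃ l : List Γ, l.length = n ∧ (∀ x ∈ l, x ∈ S ∨ x⁻¹ ∈ S) ∧
    l.prod = γ}) ⟨l.length, l, rfl, hl, hprod⟩

lemma finite_setOf_wordLength_le (hS : S.Finite) (hgen : Subgroup.closure S = ⊤) (N : ℕ) :
    {γ | wordLength S γ ≤ N}.Finite := by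
  have : Finite ↥(S ∪ S⁻¹) := (hS.union hS.inv).to_subtype
  refine ((List.finite_length_le _ N).image fun l : List ↥(S ∪ S⁻¹) => (l.map (↑)).prod).subset ?_
  intro γ hγ
  obtain ⟨l, hlen, hl, rfl⟩ := exists_list_length_eq_wordLength hgen γ
  lift l to List ↥(S ∪ S⁻¹) using fun x hx => by simpa using hl x hx
  exact ⟨l, by rw [Set.mem_ofPred_eq, ← List.length_map Subtype.val]; exact hlen.trans_le hγ,
    rfl⟩

lemma exists_generator_chain (hS : Subgroup.closure S = ⊤) (g h : Γ) :
    ∃ (N : ℕ) (x : ℕ → Γ), x 0 = g ∧ x N = h ∧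
      ∀ i < N, (x i)⁻¹ * x (i + 1) ∈ S ∨ ((x i)⁻¹ * x (i + 1))⁻¹ ∈ S := by
  obtain ⟨l, hl, hprod⟩ := exists_list_prod_eq_of_closure_eq_top hS (g⁻¹ * h)
  refine ⟨l.length, fun i => g * (l.take i).prod, by simp, by simp [hprod], fun i hi => ?_⟩
  simpa [List.prod_take_succ l i hi, mul_assoc] using hl _ (List.getElem_mem hi)

lemma le_floydDist (hS : Subgroup.closure S = ⊤) {f : ℕ → ℝ} {g h : Γ} {b : ℝ}
    (hb : ∀ (N : ℕ) (x : ℕ → Γ), x 0 = g → x N = h →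
      (∀ i < N, (x i)⁻¹ * x (i + 1) ∈ S ∨ ((x i)⁻¹ * x (i + 1))⁻¹ ∈ S) →
      b ≤ ∑ i ∈ Finset.range N, f (max (wordLength S (x i)) (wordLength S (x (i + 1))))) :
    b ≤ floydDist S f g h := by
  obtain ⟨N, x, hx0, hxN, hx⟩ := exists_generator_chain hS g h
  refine le_csInf ⟨_, N, x, hx0, hxN, hx, rfl⟩ ?_
  rintro r ⟨N, x, hx0, hxN, hx, rfl⟩
  exact hb N x hx0 hxN hx

end WordMetric

lemma exists_seq_of_endpoints {α : Type*} {P : ℕ → α → Prop} (hP : ∀ i, ∃ a, P i a) {N : ℕ}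
    (hN : N ≠ 0) {a b : α} (ha : P 0 a) (hb : P N b) :
    ∃ v : ℕ → α, v 0 = a ∧ v N = b ∧ ∀ i, P i (v i) := by
  choose c hc using hP
  refine ⟨Function.update (Function.update c N b) 0 a, by simp, by simp [hN], fun i => ?_⟩
  rcases eq_or_ne i 0 with rfl | hi0
  · simpa using ha
  rcases eq_or_ne i N with rfl | hiN
  · simpa [hi0] using hb
  · simpa [hi0, hiN] using hc i

lemma isUnit_det_coe {n R : Type*} [Fintype n] [DecidableEq n] [CommRing R]
    (A : Matrix.SpecialLinearGroup n R) : IsUnit (A : Matrix n n R).det := by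
  rw [Matrix.SpecialLinearGroup.det_coe]
  exact isUnit_one

section Representation

variable {Γ : Type*} [Group Γ] {S : Set Γ} {n : Type*} [Fintype n] [DecidableEq n] [Nonempty n]
  (ρ : Γ →* Matrix.SpecialLinearGroup n ℝ) {f : ℕ → ℝ} {K L : ℝ}

lemma sval_two_lt_sval_one_of_lt_inv
    (hgap : ∀ γ, sval 2 (ρ γ : Matrix n n ℝ) / sval 1 (ρ γ : Matrix n n ℝ) ≤
      K * f (wordLength S γ))
    (hK : 0 < K) {γ : Γ} (hγ : f (wordLength S γ) < K⁻¹) :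
    sval 2 (ρ γ : Matrix n n ℝ) < sval 1 (ρ γ : Matrix n n ℝ) := by
  refine (div_lt_one (sval_one_pos (isUnit_det_coe _))).1 ((hgap γ).trans_lt ?_)
  simpa [hK.ne'] using mul_lt_mul_of_pos_left hγ hK

lemma sqrt_one_sub_sq_dotProduct_le_of_adjacent
    (hgap : ∀ γ, sval 2 (ρ γ : Matrix n n ℝ) / sval 1 (ρ γ : Matrix n n ℝ) ≤
      K * f (wordLength S γ))
    (hL : ∀ s, s ∈ S ∨ s⁻¹ ∈ S → sval 1 (ρ s : Matrix n n ℝ) * sval 1 (ρ s : Matrix n n ℝ)⁻¹ ≤ L)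
    {a b : Γ} (hab : a⁻¹ * b ∈ S ∨ (a⁻¹ * b)⁻¹ ∈ S) {u w : n → ℝ}
    (hu : SpansCartanAttractor (ρ a) u) (hw : SpansCartanAttractor (ρ b) w) :
    √(1 - (u ⬝ᵥ w) ^ 2) ≤ K * L * f (max (wordLength S a) (wordLength S b)) := by
  wlog hba : wordLength S b ≤ wordLength S a generalizing a b u w
  · rw [max_comm, dotProduct_comm]
    exact this (by simpa [or_comm] using hab) hw hu (le_of_not_ge hba)
  have hρb : (ρ a : Matrix n n ℝ) * ρ (a⁻¹ * b) = ρ b := by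
    rw [← Matrix.SpecialLinearGroup.coe_mul, ← map_mul, mul_inv_cancel_left]
  calc √(1 - (u ⬝ᵥ w) ^ 2)
      ≤ sval 2 (ρ a : Matrix n n ℝ) / sval 1 (ρ a : Matrix n n ℝ) *
          (sval 1 (ρ (a⁻¹ * b) : Matrix n n ℝ) * sval 1 (ρ (a⁻¹ * b) : Matrix n n ℝ)⁻¹) :=
        hu.sqrt_one_sub_sq_dotProduct_le (isUnit_det_coe _) (isUnit_det_coe _) (hρb ▸ hw)
    _ ≤ K * f (wordLength S a) * L :=
        mul_le_mul (hgap a) (hL _ hab) (mul_nonneg (sval_nonneg 1 _) (sval_nonneg 1 _))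
          ((div_nonneg (sval_nonneg 2 _) (sval_nonneg 1 _)).trans (hgap a))
    _ = K * L * f (max (wordLength S a) (wordLength S b)) := by rw [max_eq_left hba]; ring

lemma sqrt_one_sub_sq_dotProduct_le_sum_of_chain
    (hgap : ∀ γ, sval 2 (ρ γ : Matrix n n ℝ) / sval 1 (ρ γ : Matrix n n ℝ) ≤
      K * f (wordLength S γ))
    (hL : ∀ s, s ∈ S ∨ s⁻¹ ∈ S → sval 1 (ρ s : Matrix n n ℝ) * sval 1 (ρ s : Matrix n n ℝ)⁻¹ ≤ L)
    {x : ℕ → Γ} {N : ℕ} (hx : ∀ i < N, (x i)⁻¹ * x (i + 1) ∈ S ∨ ((x i)⁻¹ * x (i + 1))⁻¹ ∈ S)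
    (hsep : sval 2 (ρ (x 0) : Matrix n n ℝ) < sval 1 (ρ (x 0) : Matrix n n ℝ)) {u w : n → ℝ}
    (hu : SpansCartanAttractor (ρ (x 0)) u) (hw : SpansCartanAttractor (ρ (x N)) w) :
    √(1 - (u ⬝ᵥ w) ^ 2) ≤
      K * L * ∑ i ∈ Finset.range N, f (max (wordLength S (x i)) (wordLength S (x (i + 1)))) := by
  rcases eq_or_ne N 0 with rfl | hN
  · simp [hu.sq_dotProduct_eq_one hsep hw]
  obtain ⟨v, rfl, rfl, hv⟩ := exists_seq_of_endpoints
    (P := fun i v => SpansCartanAttractor (ρ (x i) : Matrix n n ℝ) v)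
    (fun i => exists_spansCartanAttractor _) hN hu hw
  rw [Finset.mul_sum]
  exact (sqrt_one_sub_sq_dotProduct_le_sum v N fun i _ => (hv i).1).trans
    (Finset.sum_le_sum fun i hi => sqrt_one_sub_sq_dotProduct_le_of_adjacent ρ hgap hL
      (hx i (Finset.mem_range.1 hi)) (hv i) (hv (i + 1)))

end Representation

theorem floyd_lipschitz_cartan_attractor_general
    {Γ : Type*} [Group Γ] (S : Finset Γ)
    (hgen : Subgroup.closure (S : Set Γ) = ⊤)
    (f : ℕ → ℝ) (hfsum : Summable f)
    (d : ℕ) (hd : 2 ≤ d)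
    (ρ : Γ →* Matrix.SpecialLinearGroup (Fin d) ℝ)
    (K : ℝ) (hK : 0 < K)
    (hgap : ∀ γ : Γ,
      sval 2 ((ρ γ : Matrix (Fin d) (Fin d) ℝ)) / sval 1 ((ρ γ : Matrix (Fin d) (Fin d) ℝ)) ≤
        K * f (wordLength (S : Set Γ) γ)) :
    ∃ C : ℝ, 0 < C ∧ ∃ A : Finset Γ,
      ∀ g h : Γ, g ∉ A → h ∉ A →
        ∀ u w : Fin d → ℝ, u ⬝ᵥ u = 1 → w ⬝ᵥ w = 1 →
          ((ρ g : Matrix (Fin d) (Fin d) ℝ) * (ρ g : Matrix (Fin d) (Fin d) ℝ)ᵀ).mulVec u =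
            (sval 1 ((ρ g : Matrix (Fin d) (Fin d) ℝ))) ^ 2 • u →
          ((ρ h : Matrix (Fin d) (Fin d) ℝ) * (ρ h : Matrix (Fin d) (Fin d) ℝ)ᵀ).mulVec w =
            (sval 1 ((ρ h : Matrix (Fin d) (Fin d) ℝ))) ^ 2 • w →
          Real.sqrt (1 - (u ⬝ᵥ w) ^ 2) ≤ C * floydDist (S : Set Γ) f g h := by
  have : Nonempty (Fin d) := ⟨⟨0, by omega⟩⟩
  obtain ⟨L, hL⟩ := ((S.finite_toSet.union S.finite_toSet.inv).image fun s =>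
    sval 1 (ρ s : Matrix (Fin d) (Fin d) ℝ) * sval 1 (ρ s : Matrix (Fin d) (Fin d) ℝ)⁻¹).bddAbove
  obtain ⟨N₀, hN₀⟩ :=
    eventually_atTop.1 (hfsum.tendsto_atTop_zero.eventually_lt_const (inv_pos.2 hK))
  refine ⟨K * max L 1, by positivity,
    (finite_setOf_wordLength_le S.finite_toSet hgen N₀).toFinset, ?_⟩
  intro g h hg _ u w hu hw hgu hhw
  rw [Set.Finite.mem_toFinset, Set.mem_ofPred_eq, not_le] at hg
  refine (div_le_iff₀' (by positivity)).1 (le_floydDist hgen fun N x hx0 hxN hx => ?_)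
  subst hx0 hxN
  exact (div_le_iff₀' (by positivity)).2 (sqrt_one_sub_sq_dotProduct_le_sum_of_chain ρ hgap
    (fun s hs => (hL ⟨s, hs, rfl⟩).trans (le_max_left _ _)) hx
    (sval_two_lt_sval_one_of_lt_inv ρ hgap hK (hN₀ _ hg.le)) ⟨hu, hgu⟩ ⟨hw, hhw⟩)

/-- Let `Γ` be a group with finite generating set `S`, `f` a Floyd function,
and `ρ : Γ → SL(d, ℝ)` a homomorphism with `σ₂(ρ(γ))/σ₁(ρ(γ)) ≤ K f(|γ|)` for all `γ`.
Then there are `C > 0` and a finite set `A ⊆ Γ` such that for all `g, h ∉ A` and all unit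
vectors `u, w` spanning the Cartan attractors of `ρ(g)`, `ρ(h)` (i.e. top eigenvectors of
`ρ(g)ρ(g)ᵀ`, `ρ(h)ρ(h)ᵀ`), `√(1 − ⟨u,w⟩²) ≤ C d_f(g,h)`. -/
theorem floyd_lipschitz_cartan_attractor
    {Γ : Type*} [Group Γ] (S : Finset Γ)
    (hgen : Subgroup.closure (S : Set Γ) = ⊤)
    (f : ℕ → ℝ) (hfpos : ∀ n, 0 < f n) (hfsum : Summable f)
    (hfanti : ∀ n, f (n + 1) ≤ f n)
    (hfm : ∃ m : ℝ, 0 < m ∧ m ≤ 1 ∧ ∀ k : ℕ, m * f k ≤ f (k + 1))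
    (d : ℕ) (hd : 2 ≤ d)
    (ρ : Γ →* Matrix.SpecialLinearGroup (Fin d) ℝ)
    (K : ℝ) (hK : 0 < K)
    (hgap : ∀ γ : Γ,
      sval 2 ((ρ γ : Matrix (Fin d) (Fin d) ℝ)) / sval 1 ((ρ γ : Matrix (Fin d) (Fin d) ℝ)) ≤
        K * f (wordLength (S : Set Γ) γ)) :
    ∃ C : ℝ, 0 < C ∧ ∃ A : Finset Γ,
      ∀ g h : Γ, g ∉ A → h ∉ A →
        ∀ u w : Fin d → ℝ, u ⬝ᵥ u = 1 → w ⬝ᵥ w = 1 →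
          ((ρ g : Matrix (Fin d) (Fin d) ℝ) * (ρ g : Matrix (Fin d) (Fin d) ℝ)ᵀ).mulVec u =
            (sval 1 ((ρ g : Matrix (Fin d) (Fin d) ℝ))) ^ 2 • u →
          ((ρ h : Matrix (Fin d) (Fin d) ℝ) * (ρ h : Matrix (Fin d) (Fin d) ℝ)ᵀ).mulVec w =
            (sval 1 ((ρ h : Matrix (Fin d) (Fin d) ℝ))) ^ 2 • w →
          Real.sqrt (1 - (u ⬝ᵥ w) ^ 2) ≤ C * floydDist (S : Set Γ) f g h :=
  floyd_lipschitz_cartan_attractor_general S hgen f hfsum d hd ρ K hK hgap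
end
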